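/- arXiv:math/0607600 — 4 statements merged into one kernel-verified Lean document; each statement's English description precedes it below -/
import Mathlib

section
/- Let Γ, Λ, G be countable discrete groups, π : Γ → G and τ : Λ → G group homomorphisms, and suppose π is ICC. Let (Σ, m) be an ME coupling of Γ and Λ, and let Φ, Φ' : Σ → G be two Borel maps satisfying Φ(γλx) = π(γ)Φ(x)τ(λ)⁻¹ and Φ'(γλx) = π(γ)Φ'(x)τ(λ)⁻¹ for all γ ∈ Γ, λ ∈ Λ, and almost every x ∈ Σ. Then Φ = Φ' almost everywhere on Σ. -/
open MeasureTheory

/-- An ME (measure equivalence) coupling of `Γ` and `Λ`: a measure-preserving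
action of `Γ × Λ` (encoded via `act : Γ → Λ → X → X`) on a σ-finite measure space,
with both restricted actions essentially free and admitting fundamental domains of
finite measure. -/
structure IsMECoupling (Γ Λ X : Type) [Group Γ] [Group Λ] [MeasurableSpace X]
    (m : Measure X) (act : Γ → Λ → X → X) : Prop where
  act_one : ∀ x, act 1 1 x = x
  act_mul : ∀ (g g' : Γ) (l l' : Λ) (x : X), act (g * g') (l * l') x = act g l (act g' l' x)
  measurable_act : ∀ g l, Measurable (act g l)
  measurePreserving : ∀ g l, MeasurePreserving (act g l) m m
  sigmaFinite : SigmaFinite m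
  free_left : ∀ᵐ x ∂m, ∀ g : Γ, g ≠ 1 → act g 1 x ≠ x
  free_right : ∀ᵐ x ∂m, ∀ l : Λ, l ≠ 1 → act 1 l x ≠ x
  exists_fundamentalDomain_left : ∃ Y : Set X, MeasurableSet Y ∧ m Y < ⊤ ∧
    (∀ᵐ x ∂m, ∃ g : Γ, act g 1 x ∈ Y) ∧
    ∀ g : Γ, g ≠ 1 → m (Y ∩ act g 1 ⁻¹' Y) = 0
  exists_fundamentalDomain_right : ∃ Z : Set X, MeasurableSet Z ∧ m Z < ⊤ ∧
    (∀ᵐ x ∂m, ∃ l : Λ, act 1 l x ∈ Z) ∧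
    ∀ l : Λ, l ≠ 1 → m (Z ∩ act 1 l ⁻¹' Z) = 0

/-- Two countable discrete groups are measure equivalent if they admit an ME coupling
on a standard Borel space. -/
def MeasureEquivalent (Γ Λ : Type) [Group Γ] [Countable Γ] [Group Λ] [Countable Λ] : Prop :=
  ∃ (X : Type) (i : MeasurableSpace X) (m : @Measure X i) (act : Γ → Λ → X → X),
    @StandardBorelSpace X i ∧ @IsMECoupling Γ Λ X _ _ i m act

/-- A homomorphism `π : Γ →* G` is ICC if every nonidentity element of `G` has an
infinite orbit under conjugation by elements of `π(Γ)`. -/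
def IsICC {Γ G : Type} [Group Γ] [Group G] (π : Γ →* G) : Prop :=
  ∀ g : G, g ≠ 1 → {h : G | ∃ γ : Γ, π γ * g * (π γ)⁻¹ = h}.Infinite

/-- Uniqueness of almost equivariant maps: if `π` is ICC, then two Borel maps
`Φ, Φ' : Σ → G` on an ME coupling of `Γ` and `Λ`, both satisfying
`Φ(γλx) = π(γ)Φ(x)τ(λ)⁻¹` a.e., agree almost everywhere. -/
theorem equivariant_map_unique {Γ Λ G X : Type} [Group Γ] [Countable Γ]
    [Group Λ] [Countable Λ] [Group G] [Countable G]
    [MeasurableSpace G] [DiscreteMeasurableSpace G]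
    [MeasurableSpace X] [StandardBorelSpace X]
    (m : Measure X) (act : Γ → Λ → X → X) (hc : IsMECoupling Γ Λ X m act)
    (π : Γ →* G) (τ : Λ →* G) (hπ : IsICC π)
    (Φ Φ' : X → G) (hΦmeas : Measurable Φ) (hΦ'meas : Measurable Φ')
    (hΦ : ∀ (γ : Γ) (l : Λ), ∀ᵐ x ∂m, Φ (act γ l x) = π γ * Φ x * (τ l)⁻¹)
    (hΦ' : ∀ (γ : Γ) (l : Λ), ∀ᵐ x ∂m, Φ' (act γ l x) = π γ * Φ' x * (τ l)⁻¹) :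
    Φ =ᵐ[m] Φ' := by
  classical
  obtain ⟨Z, hZm, hZfin, hZae, hZdisj⟩ := hc.exists_fundamentalDomain_right
  have act_comp : ∀ (γ γ' : Γ) (l l' : Λ) (x : X),
      act γ l (act γ' l' x) = act (γ * γ') (l * l') x := fun γ γ' l l' x =>
    (hc.act_mul γ γ' l l' x).symm
  have act_inv : ∀ (γ : Γ) (l : Λ) (x : X), act γ l (act γ⁻¹ l⁻¹ x) = x := by
    intro γ l x
    rw [act_comp, mul_inv_cancel, mul_inv_cancel, hc.act_one]
  set A : G → Set X := fun g => {x | Φ x * (Φ' x)⁻¹ = g} with hA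
  have hAmeas : ∀ g, MeasurableSet (A g) := by
    intro g
    have : A g = ⋃ a : G, (Φ ⁻¹' {a} ∩ Φ' ⁻¹' {g⁻¹ * a}) := by
      ext x
      simp only [hA, Set.mem_setOf_eq, Set.mem_iUnion, Set.mem_inter_iff,
        Set.mem_preimage, Set.mem_singleton_iff]
      constructor
      · intro hx
        refine ⟨Φ x, rfl, ?_⟩
        rw [← hx]; group
      · rintro ⟨a, ha, ha'⟩
        rw [ha, ha']; group
    rw [this]
    exact MeasurableSet.iUnion fun a =>
      (hΦmeas MeasurableSet.of_discrete).inter (hΦ'meas MeasurableSet.of_discrete)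
  set B : G → Set X := fun g => Z ∩ A g with hB
  have hBmeas : ∀ g, MeasurableSet (B g) := fun g => hZm.inter (hAmeas g)
  have key : ∀ (γ : Γ) (l : Λ), ∀ᵐ x ∂m,
      Φ (act γ l x) * (Φ' (act γ l x))⁻¹ = π γ * (Φ x * (Φ' x)⁻¹) * (π γ)⁻¹ := by
    intro γ l
    filter_upwards [hΦ γ l, hΦ' γ l] with x h1 h2
    rw [h1, h2]; group
  have main : ∀ (g : G) (γ : Γ), m (B g) ≤ m (B (π γ * g * (π γ)⁻¹)) := by
    intro g γ
    set h := π γ * g * (π γ)⁻¹ with hh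
    set E : Λ → Set X := fun l => B g ∩ (act γ l ⁻¹' B h) with hE
    have hEmeas : ∀ l, MeasurableSet (E l) :=
      fun l => (hBmeas g).inter ((hc.measurable_act γ l) (hBmeas h))
    set F : Λ → Set X := fun l => act γ⁻¹ l⁻¹ ⁻¹' E l with hF
    have hFmeas : ∀ l, MeasurableSet (F l) := fun l => (hc.measurable_act _ _) (hEmeas l)
    -- a.e. every x can be moved into Z by some `act γ l`
    have hWm : MeasurableSet (⋃ l : Λ, act 1 l ⁻¹' Z) :=
      MeasurableSet.iUnion fun l => (hc.measurable_act 1 l) hZm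
    have hW0 : m (⋃ l : Λ, act 1 l ⁻¹' Z)ᶜ = 0 := by
      have h1 := hZae
      rw [MeasureTheory.ae_iff] at h1
      convert h1 using 2
      ext y
      simp [Set.mem_iUnion]
    have hpre0 : m (act γ 1 ⁻¹' (⋃ l : Λ, act 1 l ⁻¹' Z)ᶜ) = 0 := by
      rw [(hc.measurePreserving γ 1).measure_preimage hWm.compl.nullMeasurableSet]
      exact hW0
    have hcov : ∀ᵐ x ∂m, ∃ l : Λ, act γ l x ∈ Z := by
      rw [MeasureTheory.ae_iff]
      refine measure_mono_null ?_ hpre0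
      intro x hx
      simp only [Set.mem_setOf_eq, not_exists] at hx
      simp only [Set.mem_preimage, Set.mem_compl_iff, Set.mem_iUnion, not_exists]
      intro l hl
      rw [act_comp, one_mul, mul_one] at hl
      exact hx l hl
    have hsub : ∀ᵐ x ∂m, x ∈ B g → x ∈ ⋃ l : Λ, E l := by
      filter_upwards [hcov, ae_all_iff.mpr (fun l => key γ l)] with x hx hkey hxB
      obtain ⟨l, hl⟩ := hx
      have hg : Φ x * (Φ' x)⁻¹ = g := hxB.2
      have hAh : act γ l x ∈ A h := by
        show Φ (act γ l x) * (Φ' (act γ l x))⁻¹ = h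
        rw [hkey l, hg]
      exact Set.mem_iUnion.2 ⟨l, hxB, hl, hAh⟩
    have step1 : m (B g) ≤ ∑' l : Λ, m (E l) := by
      calc m (B g) ≤ m (⋃ l : Λ, E l) := measure_mono_ae hsub
        _ ≤ ∑' l : Λ, m (E l) := measure_iUnion_le E
    have step2 : ∀ l : Λ, m (E l) = m (F l) := by
      intro l
      rw [hF]
      rw [(hc.measurePreserving γ⁻¹ l⁻¹).measure_preimage (hEmeas l).nullMeasurableSet]
    have hdisj : Pairwise (Function.onFun (MeasureTheory.AEDisjoint m) F) := by
      intro l l' hne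
      have hne' : l'⁻¹ * l ≠ 1 := by
        intro hcontra
        exact hne (inv_mul_eq_one.mp hcontra).symm
      have hsub2 : F l ∩ F l' ⊆ act γ⁻¹ l⁻¹ ⁻¹' (Z ∩ act 1 (l'⁻¹ * l) ⁻¹' Z) := by
        rintro y ⟨hy1, hy2⟩
        have hx1 : act γ⁻¹ l⁻¹ y ∈ Z := hy1.1.1
        have hx2 : act γ⁻¹ l'⁻¹ y ∈ Z := hy2.1.1
        refine ⟨hx1, ?_⟩
        show act 1 (l'⁻¹ * l) (act γ⁻¹ l⁻¹ y) ∈ Z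
        rw [act_comp, one_mul, mul_inv_cancel_right]
        exact hx2
      refine measure_mono_null hsub2 ?_
      rw [(hc.measurePreserving γ⁻¹ l⁻¹).measure_preimage
        (hZm.inter ((hc.measurable_act 1 (l'⁻¹ * l)) hZm)).nullMeasurableSet]
      exact hZdisj _ hne'
    have step3 : ∑' l : Λ, m (F l) = m (⋃ l : Λ, F l) :=
      (measure_iUnion₀ hdisj (fun l => (hFmeas l).nullMeasurableSet)).symm
    have step4 : (⋃ l : Λ, F l) ⊆ B h := by
      intro y hy
      obtain ⟨l, hl⟩ := Set.mem_iUnion.1 hy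
      have := hl.2
      rw [Set.mem_preimage, act_inv] at this
      exact this
    calc m (B g) ≤ ∑' l : Λ, m (E l) := step1
      _ = ∑' l : Λ, m (F l) := by exact tsum_congr step2
      _ = m (⋃ l : Λ, F l) := step3
      _ ≤ m (B h) := measure_mono step4
  by_contra hcon
  have hne : m {x | Φ x ≠ Φ' x} ≠ 0 := by
    rw [Filter.EventuallyEq, MeasureTheory.ae_iff] at hcon
    exact hcon
  obtain ⟨g, hg1, hAg⟩ : ∃ g : G, g ≠ 1 ∧ m (A g) ≠ 0 := by
    by_contra hno
    push_neg at hno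
    apply hne
    have hsub : {x | Φ x ≠ Φ' x} ⊆ ⋃ g : G, ⋃ _ : g ≠ 1, A g := by
      intro x hx
      have h1 : Φ x * (Φ' x)⁻¹ ≠ 1 := by
        simp only [Set.mem_setOf_eq] at hx
        simpa [mul_inv_eq_one] using hx
      exact Set.mem_iUnion.2 ⟨Φ x * (Φ' x)⁻¹, Set.mem_iUnion.2 ⟨h1, rfl⟩⟩
    refine measure_mono_null hsub ?_
    exact measure_iUnion_null fun g => measure_iUnion_null fun hg => hno g hg
  have hBg : m (B g) ≠ 0 := by
    intro h0
    apply hAg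
    have hsub : ∀ᵐ x ∂m, x ∈ A g → x ∈ ⋃ l : Λ, act 1 l ⁻¹' B g := by
      filter_upwards [hZae, ae_all_iff.mpr (fun l => key 1 l)] with x hx hkey hxA
      obtain ⟨l, hl⟩ := hx
      have hAg' : act 1 l x ∈ A g := by
        show Φ (act 1 l x) * (Φ' (act 1 l x))⁻¹ = g
        rw [hkey l, (hxA : Φ x * (Φ' x)⁻¹ = g), map_one]
        group
      exact Set.mem_iUnion.2 ⟨l, hl, hAg'⟩
    have hle := measure_mono_ae hsub
    have hzero : m (⋃ l : Λ, act 1 l ⁻¹' B g) = 0 :=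
      measure_iUnion_null fun l => by
        rw [(hc.measurePreserving 1 l).measure_preimage (hBmeas g).nullMeasurableSet]
        exact h0
    exact le_antisymm (le_trans hle (le_of_eq hzero)) zero_le
  obtain ⟨n, hn⟩ := ENNReal.exists_nat_mul_gt hBg hZfin.ne
  obtain ⟨T, hTsub, hTcard⟩ := (hπ g hg1).exists_subset_card_eq n
  have hpd : (T : Set G).PairwiseDisjoint B := by
    intro h hh h' hh' hne'
    refine Set.disjoint_left.2 fun x hx hx' => hne' ?_
    have e1 : Φ x * (Φ' x)⁻¹ = h := hx.2
    have e2 : Φ x * (Φ' x)⁻¹ = h' := hx'.2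
    rw [← e1, ← e2]
  have hsum : ∑ h ∈ T, m (B h) = m (⋃ h ∈ T, B h) :=
    (measure_biUnion_finset hpd fun h _ => hBmeas h).symm
  have hle2 : m (⋃ h ∈ T, B h) ≤ m Z :=
    measure_mono (Set.iUnion₂_subset fun h _ => Set.inter_subset_left)
  have hge : (n : ENNReal) * m (B g) ≤ ∑ h ∈ T, m (B h) := by
    have : ∀ h ∈ T, m (B g) ≤ m (B h) := by
      intro h hh
      obtain ⟨γ, rfl⟩ := hTsub hh
      exact main g γ
    calc (n : ENNReal) * m (B g) = T.card • m (B g) := by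
          rw [hTcard, nsmul_eq_mul]
      _ ≤ ∑ h ∈ T, m (B h) := Finset.card_nsmul_le_sum T _ _ this
  exact absurd (le_trans hge (le_trans (le_of_eq hsum) hle2)) (not_le.2 hn)
end

section
/- Let Γ, Λ, G be countable discrete groups with homomorphisms π : Γ → G, τ : Λ → G, let Γ' ≤ Γ and Λ' ≤ Λ be finite-index normal subgroups, and suppose the restriction τ|_{Λ'} : Λ' → G is ICC. Let (Σ, m) be an ME coupling of Γ and Λ, and let Φ : Σ → G be a Borel map satisfying Φ(γλx) = π(γ)Φ(x)τ(λ)⁻¹ for all γ ∈ Γ', λ ∈ Λ', and almost every x ∈ Σ. Then the same equivariance identity holds for all γ ∈ Γ and λ ∈ Λ, for almost every x ∈ Σ. -/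
open MeasureTheory

/-!
For fixed `γ` and `l`, the defect `E x = Φ(x)⁻¹ π(γ)⁻¹ Φ(γ l x) τ(l)` is, by normality of `Γ'` and
`Λ'`, a.e. invariant under `Γ'` and a.e. equivariant for `Λ'` acting on `G` by `τ`-conjugation.
Since `Γ'` has finite index it has a fundamental domain `s` of finite measure, and since the
`Λ'`-action commutes with the `Γ'`-action it carries `s` to other fundamental domains; hence the
masses `m ({E = c} ∩ s)` are constant along `τ(Λ')`-conjugacy classes. A finite measure has only
finitely many atoms of mass at least a given `ε > 0`, whereas by the ICC hypothesis the class of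
every `c ≠ 1` is infinite. So `E = 1` almost everywhere.
-/

open scoped Pointwise ENNReal

namespace MeasureTheory

theorem measure_iUnion_quotient_out_inv_smul_ne_top {G α : Type*} [Group G]
    [MulAction G α] [MeasurableSpace α] {μ : Measure α} [MeasurableConstSMul G α]
    [SMulInvariantMeasure G α μ] {s : Set α} (hs : μ s ≠ ∞) (H : Subgroup G) [H.FiniteIndex] :
    μ (⋃ q : G ⧸ H, q.out⁻¹ • s) ≠ ∞ := by
  have := H.fintypeQuotientOfFiniteIndex
  refine ne_top_of_le_ne_top ?_ (measure_iUnion_le _)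
  simpa [measure_smul] using ENNReal.mul_ne_top (by simp) hs

namespace IsFundamentalDomain

variable {G α : Type*} [Group G] [MulAction G α] [MeasurableSpace α] {μ : Measure α}
  {s t A : Set α} [Countable G] [MeasurableConstSMul G α] [SMulInvariantMeasure G α μ]

theorem measure_inter_eq_of_ae_invariant (hs : IsFundamentalDomain G s μ)
    (ht : IsFundamentalDomain G t μ) (hA : ∀ g : G, g • A =ᵐ[μ] A) :
    μ (A ∩ s) = μ (A ∩ t) :=
  calc μ (A ∩ s) = ∑' g : G, μ (g • (A ∩ s) ∩ t) := ht.measure_eq_tsum _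
    _ = ∑' g : G, μ ((A ∩ t) ∩ g • s) := by
      refine tsum_congr fun g => measure_congr ?_
      rw [Set.smul_set_inter, Set.inter_right_comm]
      exact ((hA g).inter (ae_eq_refl _)).inter (ae_eq_refl _)
    _ = μ (A ∩ t) := (hs.measure_eq_tsum' _).symm

theorem measure_smul_inter_eq_of_ae_invariant {K : Type*} [Group K] [MulAction K α]
    [MeasurableConstSMul K α] [SMulInvariantMeasure K α μ] [SMulCommClass K G α]
    (hs : IsFundamentalDomain G s μ) (hA : ∀ g : G, g • A =ᵐ[μ] A) (k : K) :
    μ (k • A ∩ s) = μ (A ∩ s) :=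
  calc μ (k • A ∩ s) = μ (k • (A ∩ k⁻¹ • s)) := by rw [Set.smul_set_inter, smul_inv_smul]
    _ = μ (A ∩ k⁻¹ • s) := measure_smul _ _ _
    _ = μ (A ∩ s) := (hs.smul_of_comm k⁻¹).measure_inter_eq_of_ae_invariant hs hA

theorem measure_eq_zero_of_ae_invariant (hs : IsFundamentalDomain G s μ)
    (hA : ∀ g : G, g • A =ᵐ[μ] A) (hAs : μ (A ∩ s) = 0) : μ A = 0 := by
  rw [hs.measure_eq_tsum]
  simp [measure_congr ((hA _).inter (ae_eq_refl s)), hAs]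

theorem iUnion_quotient_out_inv_smul (hs : IsFundamentalDomain G s μ) (H : Subgroup G) :
    IsFundamentalDomain H (⋃ q : G ⧸ H, q.out⁻¹ • s) μ :=
  have : Countable (G ⧸ H) := QuotientGroup.mk_surjective.countable
  { nullMeasurableSet := .iUnion fun _ => hs.nullMeasurableSet_smul _
    ae_covers := by
      filter_upwards [hs.ae_covers] with x ⟨g, hg⟩
      obtain ⟨δ, hδ⟩ := QuotientGroup.mk_out_eq_mul H g
      refine ⟨δ⁻¹, Set.mem_iUnion.2 ⟨g, ?_⟩⟩
      rw [Set.mem_smul_set_iff_inv_smul_mem, inv_inv, hδ, Subgroup.smul_def, smul_smul]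
      simpa using hg
    aedisjoint δ δ' hδ := by
      simp only [Function.onFun, Set.smul_set_iUnion, Subgroup.smul_def, smul_smul,
        AEDisjoint.iUnion_left_iff, AEDisjoint.iUnion_right_iff]
      intro q' q
      refine hs.aedisjoint fun h => hδ ?_
      obtain rfl : q = q' := by
        rw [← QuotientGroup.out_eq' q, ← QuotientGroup.out_eq' q', QuotientGroup.eq]
        have : q.out⁻¹ * q'.out = (δ : G)⁻¹ * δ' :=
          calc q.out⁻¹ * q'.out = (δ : G)⁻¹ * (δ * q.out⁻¹) * q'.out := by group
            _ = (δ : G)⁻¹ * δ' := by rw [h]; group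
        exact this ▸ mul_mem (inv_mem δ.2) δ'.2
      exact Subtype.ext (mul_right_cancel h) }

end IsFundamentalDomain

end MeasureTheory

theorem IsICC.ae_eq_one_of_conj_equivariant {H K G α : Type} [Group H] [Countable H] [Group K]
    [Group G] [Countable G] [MeasurableSpace G] [MeasurableSingletonClass G] [MeasurableSpace α]
    [MulAction H α] [MulAction K α] [SMulCommClass K H α] [MeasurableConstSMul H α]
    [MeasurableConstSMul K α] {μ : Measure α} [SMulInvariantMeasure H α μ]
    [SMulInvariantMeasure K α μ] {ρ : K →* G} (hρ : IsICC ρ) {s : Set α}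
    (hs : IsFundamentalDomain H s μ) (hs_fin : μ s ≠ ∞) {E : α → G} (hE : Measurable E)
    (hEH : ∀ h : H, ∀ᵐ x ∂μ, E (h • x) = E x)
    (hEK : ∀ k : K, ∀ᵐ x ∂μ, E (k • x) = ρ k * E x * (ρ k)⁻¹) :
    ∀ᵐ x ∂μ, E x = 1 := by
  set B : G → Set α := fun c => E ⁻¹' {c}
  have hB : ∀ c, MeasurableSet (B c) := fun c => hE (measurableSet_singleton c)
  have hB_inv : ∀ c (h : H), h • B c =ᵐ[μ] B c := by
    intro c h
    refine Filter.eventuallyEq_set.2 ?_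
    filter_upwards [hEH h⁻¹] with x hx
    simp only [B, Set.mem_smul_set_iff_inv_smul_mem, Set.mem_preimage, Set.mem_singleton_iff, hx]
  have hB_conj : ∀ c (k : K), k • B c =ᵐ[μ] B (ρ k * c * (ρ k)⁻¹) := by
    intro c k
    refine Filter.eventuallyEq_set.2 ?_
    filter_upwards [hEK k⁻¹] with x hx
    simp only [B, Set.mem_smul_set_iff_inv_smul_mem, Set.mem_preimage, Set.mem_singleton_iff, hx,
      map_inv, inv_inv]
    exact ⟨fun h => by rw [← h]; group, fun h => by rw [h]; group⟩
  have hB_conj_inter : ∀ c (k : K), μ (B (ρ k * c * (ρ k)⁻¹) ∩ s) = μ (B c ∩ s) := fun c k =>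
    (measure_congr ((hB_conj c k).symm.inter (ae_eq_refl s))).trans
      (hs.measure_smul_inter_eq_of_ae_invariant (hB_inv c) k)
  have hB_null : ∀ d ≠ 1, μ (B d) = 0 := by
    intro d hd
    by_contra hpos
    have hε : 0 < μ (B d ∩ s) := pos_iff_ne_zero.2 fun h0 =>
      hpos (hs.measure_eq_zero_of_ae_invariant (hB_inv d) h0)
    have : IsFiniteMeasure (μ.restrict s) := isFiniteMeasure_restrict.2 hs_fin
    refine hρ d hd ((Measure.finite_const_le_meas_of_disjoint_iUnion (μ.restrict s) hε hB
      (fun c c' hcc' => (Set.disjoint_singleton.2 hcc').preimage E) (measure_ne_top _ _)).subset ?_)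
    rintro _ ⟨k, rfl⟩
    rw [Set.mem_ofPred_eq, Measure.restrict_apply (hB _)]
    exact (hB_conj_inter d k).ge
  have hE_ne : ∀ᵐ x ∂μ, ∀ d : G, d ≠ 1 → x ∉ B d := ae_all_iff.2 fun d => by
    by_cases hd : d = 1
    · simp [hd]
    · filter_upwards [measure_eq_zero_iff_ae_notMem.1 (hB_null d hd)] with x hx using fun _ => hx
  filter_upwards [hE_ne] with x hx
  by_contra h
  exact hx (E x) h rfl

section EquivarianceDefect

variable {Γ Λ G X : Type} [Group Γ] [Group Λ] [Group G]

def equivarianceDefect (π : Γ →* G) (τ : Λ →* G) (act : Γ → Λ → X → X) (Φ : X → G) (γ : Γ)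
    (l : Λ) (x : X) : G :=
  (Φ x)⁻¹ * (π γ)⁻¹ * Φ (act γ l x) * τ l

variable {π : Γ →* G} {τ : Λ →* G} {act : Γ → Λ → X → X} {Φ : X → G} {γ : Γ} {l : Λ}

theorem equivarianceDefect_eq_one_iff {x : X} :
    equivarianceDefect π τ act Φ γ l x = 1 ↔ Φ (act γ l x) = π γ * Φ x * (τ l)⁻¹ := by
  rw [equivarianceDefect, mul_assoc, mul_assoc, inv_mul_eq_one, eq_comm, inv_mul_eq_iff_eq_mul,
    ← eq_mul_inv_iff_mul_eq]

theorem measurable_equivarianceDefect [MeasurableSpace X] [MeasurableSpace G]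
    [DiscreteMeasurableSpace G] [Countable G] (hΦ : Measurable Φ) (hact : Measurable (act γ l)) :
    Measurable (equivarianceDefect π τ act Φ γ l) := by
  unfold equivarianceDefect
  fun_prop

end EquivarianceDefect

namespace IsMECoupling

variable {Γ Λ X : Type} [Group Γ] [Group Λ] [MeasurableSpace X] {m : Measure X}
  {act : Γ → Λ → X → X}

abbrev leftAction (hc : IsMECoupling Γ Λ X m act) : MulAction Γ X where
  smul g := act g 1
  one_smul := hc.act_one
  mul_smul g g' x := show act (g * g') 1 x = act g 1 (act g' 1 x) by
    simpa using hc.act_mul g g' 1 1 x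

abbrev rightAction (hc : IsMECoupling Γ Λ X m act) : MulAction Λ X where
  smul l := act 1 l
  one_smul := hc.act_one
  mul_smul l l' x := show act 1 (l * l') x = act 1 l (act 1 l' x) by
    simpa using hc.act_mul 1 1 l l' x

theorem ae_eq_one_of_conj_equivariant (hc : IsMECoupling Γ Λ X m act) [Countable Γ]
    {G : Type} [Group G] [Countable G] [MeasurableSpace G] [MeasurableSingletonClass G]
    (Γ' : Subgroup Γ) [Γ'.FiniteIndex] {Λ' : Subgroup Λ} {τ : Λ →* G}
    (hτ : IsICC (τ.comp Λ'.subtype)) {E : X → G} (hE : Measurable E)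
    (hE_conj : ∀ γ ∈ Γ', ∀ l ∈ Λ', ∀ᵐ x ∂m, E (act γ l x) = τ l * E x * (τ l)⁻¹) :
    ∀ᵐ x ∂m, E x = 1 := by
  let _ := hc.leftAction
  let _ := hc.rightAction
  have : SMulCommClass Λ Γ X := ⟨fun l g x =>
    show act 1 l (act g 1 x) = act g 1 (act 1 l x) by simp only [← hc.act_mul, mul_one, one_mul]⟩
  have : MeasurableConstSMul Γ X := ⟨fun g => hc.measurable_act g 1⟩
  have : MeasurableConstSMul Λ X := ⟨fun l => hc.measurable_act 1 l⟩
  have : SMulInvariantMeasure Γ X m :=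
    ⟨fun g _ hA => (hc.measurePreserving g 1).measure_preimage hA.nullMeasurableSet⟩
  have : SMulInvariantMeasure Λ X m :=
    ⟨fun l _ hA => (hc.measurePreserving 1 l).measure_preimage hA.nullMeasurableSet⟩
  obtain ⟨Y, hYm, hYfin, hYcov, hYdisj⟩ := hc.exists_fundamentalDomain_left
  have hY : IsFundamentalDomain Γ Y m := .mk'' hYm.nullMeasurableSet hYcov
    (fun g hg => by
      rw [AEDisjoint, ← Set.preimage_smul_inv, Set.inter_comm]
      exact hYdisj g⁻¹ (inv_ne_one.2 hg))
    (fun g => (measurePreserving_smul g m).quasiMeasurePreserving)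
  exact hτ.ae_eq_one_of_conj_equivariant (hY.iUnion_quotient_out_inv_smul Γ')
    (measure_iUnion_quotient_out_inv_smul_ne_top hYfin.ne Γ') hE
    (fun δ => (hE_conj δ δ.2 1 (one_mem _)).mono fun x hx => by
      rwa [map_one, one_mul, inv_one, mul_one] at hx)
    (fun k => hE_conj 1 (one_mem _) k k.2)

theorem equivarianceDefect_act_ae_eq_conj {G : Type} [Group G] (hc : IsMECoupling Γ Λ X m act)
    {π : Γ →* G} {τ : Λ →* G} {Γ' : Subgroup Γ} {Λ' : Subgroup Λ} (hΓ' : Γ'.Normal)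
    (hΛ' : Λ'.Normal) {Φ : X → G}
    (hΦ : ∀ γ ∈ Γ', ∀ l ∈ Λ', ∀ᵐ x ∂m, Φ (act γ l x) = π γ * Φ x * (τ l)⁻¹) (γ : Γ) (l : Λ) :
    ∀ γ' ∈ Γ', ∀ l' ∈ Λ', ∀ᵐ x ∂m, equivarianceDefect π τ act Φ γ l (act γ' l' x) =
      τ l' * equivarianceDefect π τ act Φ γ l x * (τ l')⁻¹ := by
  intro γ' hγ' l' hl'
  have hswap : ∀ x, act γ l (act γ' l' x) = act (γ * γ' * γ⁻¹) (l * l' * l⁻¹) (act γ l x) := by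
    intro x
    simp only [← hc.act_mul, inv_mul_cancel_right]
  filter_upwards [hΦ γ' hγ' l' hl', (hc.measurePreserving γ l).quasiMeasurePreserving.ae
    (hΦ _ (hΓ'.conj_mem γ' hγ' γ) _ (hΛ'.conj_mem l' hl' l))] with x h h'
  simp only [equivarianceDefect, hswap, h, h', map_mul, map_inv]
  group

end IsMECoupling

theorem equivariant_map_extend_general {Γ Λ G X : Type} [Group Γ] [Countable Γ]
    [Group Λ] [Group G] [Countable G]
    [MeasurableSpace G] [DiscreteMeasurableSpace G]
    [MeasurableSpace X]
    (m : Measure X) (act : Γ → Λ → X → X) (hc : IsMECoupling Γ Λ X m act)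
    (π : Γ →* G) (τ : Λ →* G)
    (Γ' : Subgroup Γ) (Λ' : Subgroup Λ) (hΓ'n : Γ'.Normal) (hΛ'n : Λ'.Normal)
    (hΓ'f : Γ'.FiniteIndex)
    (hicc : IsICC (τ.comp Λ'.subtype))
    (Φ : X → G) (hΦmeas : Measurable Φ)
    (hΦ : ∀ γ ∈ Γ', ∀ l ∈ Λ', ∀ᵐ x ∂m, Φ (act γ l x) = π γ * Φ x * (τ l)⁻¹) :
    ∀ (γ : Γ) (l : Λ), ∀ᵐ x ∂m, Φ (act γ l x) = π γ * Φ x * (τ l)⁻¹ := by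
  intro γ l
  filter_upwards [hc.ae_eq_one_of_conj_equivariant Γ' hicc
    (measurable_equivarianceDefect hΦmeas (hc.measurable_act γ l))
    (hc.equivarianceDefect_act_ae_eq_conj hΓ'n hΛ'n hΦ γ l)] with x hx
  exact equivarianceDefect_eq_one_iff.1 hx

/-- Extension of equivariance from finite-index normal subgroups: if `Γ' ⊴ Γ` and
`Λ' ⊴ Λ` have finite index, `τ` restricted to `Λ'` is ICC, and a Borel map
`Φ : Σ → G` on an ME coupling of `Γ` and `Λ` is almost `Γ' × Λ'`-equivariant, then
`Φ` is almost `Γ × Λ`-equivariant. -/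
theorem equivariant_map_extend {Γ Λ G X : Type} [Group Γ] [Countable Γ]
    [Group Λ] [Countable Λ] [Group G] [Countable G]
    [MeasurableSpace G] [DiscreteMeasurableSpace G]
    [MeasurableSpace X] [StandardBorelSpace X]
    (m : Measure X) (act : Γ → Λ → X → X) (hc : IsMECoupling Γ Λ X m act)
    (π : Γ →* G) (τ : Λ →* G)
    (Γ' : Subgroup Γ) (Λ' : Subgroup Λ) (hΓ'n : Γ'.Normal) (hΛ'n : Λ'.Normal)
    (hΓ'f : Γ'.FiniteIndex) (hΛ'f : Λ'.FiniteIndex)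
    (hicc : IsICC (τ.comp Λ'.subtype))
    (Φ : X → G) (hΦmeas : Measurable Φ)
    (hΦ : ∀ γ ∈ Γ', ∀ l ∈ Λ', ∀ᵐ x ∂m, Φ (act γ l x) = π γ * Φ x * (τ l)⁻¹) :
    ∀ (γ : Γ) (l : Λ), ∀ᵐ x ∂m, Φ (act γ l x) = π γ * Φ x * (τ l)⁻¹ :=
  equivariant_map_extend_general m act hc π τ Γ' Λ' hΓ'n hΛ'n hΓ'f hicc Φ hΦmeas hΦ
end

section
/- Suppose a measure-preserving Γ-action on a standard probability space (X, μ) admits a Borel map Φ : X → G into a countable group G such that Φ(γ·x) = π(γ)Φ(x)π(γ)⁻¹ for all γ ∈ Γ and a.e. x ∈ X, where π : Γ → G is an ICC homomorphism. Then Φ(x) = e for almost every x ∈ X. -/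
open MeasureTheory

/-- If a measure-preserving `Γ`-action on a standard probability space admits a
Borel map `Φ : X → G` with `Φ(γ·x) = π(γ)Φ(x)π(γ)⁻¹` a.e. for an ICC homomorphism
`π`, then `Φ = e` almost everywhere. -/
theorem conj_equivariant_map_trivial {Γ G X : Type} [Group Γ] [Countable Γ]
    [Group G] [Countable G] [MeasurableSpace G] [DiscreteMeasurableSpace G]
    [MeasurableSpace X] [StandardBorelSpace X]
    (μ : Measure X) [IsProbabilityMeasure μ]
    (a : Γ → X → X) (h1 : ∀ x, a 1 x = x)
    (hmul : ∀ g h x, a (g * h) x = a g (a h x))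
    (hmeas : ∀ g, Measurable (a g)) (hmp : ∀ g, MeasurePreserving (a g) μ μ)
    (π : Γ →* G) (hicc : IsICC π)
    (Φ : X → G) (hΦ : Measurable Φ)
    (heq : ∀ g : Γ, ∀ᵐ x ∂μ, Φ (a g x) = π g * Φ x * (π g)⁻¹) :
    ∀ᵐ x ∂μ, Φ x = 1 := by
  have key : ∀ g : G, g ≠ 1 → μ (Φ ⁻¹' {g}) = 0 := by
    intro g hg
    set m := μ (Φ ⁻¹' {g}) with hm
    by_contra hne
    -- every conjugate of g has the same measure
    have hconj : ∀ γ : Γ, μ (Φ ⁻¹' {π γ * g * (π γ)⁻¹}) = m := by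
      intro γ
      have hA1 : μ ((a γ) ⁻¹' (Φ ⁻¹' {π γ * g * (π γ)⁻¹}))
          = μ (Φ ⁻¹' {π γ * g * (π γ)⁻¹}) :=
        (hmp γ).measure_preimage (hΦ (measurableSet_singleton _)).nullMeasurableSet
      have hA2 : (a γ) ⁻¹' (Φ ⁻¹' {π γ * g * (π γ)⁻¹}) =ᵐ[μ] Φ ⁻¹' {g} := by
        filter_upwards [heq γ] with x hx
        have : (Φ (a γ x) = π γ * g * (π γ)⁻¹) ↔ (Φ x = g) := by
          rw [hx]
          constructor
          · intro h
            have h2 : π γ * Φ x = π γ * g := mul_right_cancel h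
            exact mul_left_cancel h2
          · intro h; rw [h]
        exact propext this
      rw [← hA1, measure_congr hA2]
    have S_inf : {h : G | ∃ γ : Γ, π γ * g * (π γ)⁻¹ = h}.Infinite := hicc g hg
    set S := {h : G | ∃ γ : Γ, π γ * g * (π γ)⁻¹ = h} with hS
    haveI : Infinite S := S_inf.to_subtype
    classical
    -- the sum of the measures of the fibers is at most 1
    have hdisj : Pairwise (Function.onFun Disjoint fun h : G => Φ ⁻¹' {h}) := by
      intro h h' hne'
      simp only [Function.onFun, Set.disjoint_left]
      intro x hx hx'
      exact hne' (by simp only [Set.mem_preimage, Set.mem_singleton_iff] at hx hx'; rw [← hx, ← hx'])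
    have hsum : (∑' h : G, μ (Φ ⁻¹' {h})) ≤ 1 := by
      rw [← measure_iUnion hdisj (fun h => hΦ (measurableSet_singleton h))]
      exact (measure_mono (Set.subset_univ _)).trans (le_of_eq measure_univ)
    have hindle : (∑' h : G, S.indicator (fun _ => m) h) ≤ ∑' h : G, μ (Φ ⁻¹' {h}) := by
      apply ENNReal.tsum_le_tsum
      intro h
      by_cases hh : h ∈ S
      · rw [Set.indicator_of_mem hh]
        obtain ⟨γ, rfl⟩ := hh
        exact le_of_eq (hconj γ).symm
      · rw [Set.indicator_of_notMem hh]; exact zero_le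
    have htop : (∑' h : G, S.indicator (fun _ => m) h) = ⊤ := by
      rw [← tsum_subtype]
      exact ENNReal.tsum_const_eq_top_of_ne_zero hne
    rw [htop] at hindle
    exact absurd (hindle.trans hsum) (by simp)
  -- conclude: a.e. Φ x = 1
  have : μ {x | Φ x ≠ 1} = 0 := by
    have : {x | Φ x ≠ 1} ⊆ ⋃ g ∈ ({g : G | g ≠ 1}), Φ ⁻¹' {g} := by
      intro x hx
      exact Set.mem_biUnion hx rfl
    refine measure_mono_null this ?_
    refine (measure_biUnion_null_iff (Set.to_countable _)).2 ?_
    intro g hg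
    exact key g hg
  filter_upwards [measure_eq_zero_iff_ae_notMem.mp this] with x hx
  by_contra h; exact hx h
end

section
/- If G is a countable group and π : Γ → G is an ICC homomorphism from a group Γ, then any finite measure on G that is invariant under conjugation by every element of π(Γ) is supported on the identity element. -/
open MeasureTheory

namespace MeasureTheory

variable {α : Type*} [MeasurableSpace α] {μ : Measure α}

theorem measure_singleton_eq_of_map_eq_self [MeasurableSingletonClass α] {f : α → α}
    (hf : Measurable f) (hinj : Function.Injective f) (hμ : μ.map f = μ) (x : α) :
    μ {f x} = μ {x} := by
  nth_rewrite 1 [← hμ]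
  rw [Measure.map_apply hf (measurableSet_singleton _), ← Set.image_singleton, hinj.preimage_image]

-- Every point of the orbit carries the mass of `x`, so an atom at `x` would give the orbit
-- infinite measure.
theorem measure_singleton_eq_zero_of_infinite_orbit [IsFiniteMeasure μ]
    [MeasurableSingletonClass α] {ι : Type*} (f : ι → α → α) (hf : ∀ i, Measurable (f i))
    (hinj : ∀ i, Function.Injective (f i)) (hμ : ∀ i, μ.map (f i) = μ) {x : α}
    (hx : (Set.range fun i => f i x).Infinite) : μ {x} = 0 := by
  by_contra hne
  refine measure_ne_top μ _ (hx.meas_eq_top ⟨μ {x}, hne, ?_⟩)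
  rintro _ ⟨i, rfl⟩
  exact (measure_singleton_eq_of_map_eq_self (hf i) (hinj i) (hμ i) x).ge

end MeasureTheory

/-- If `π : Γ →* G` is ICC (with `G` countable discrete), then any finite measure
on `G` invariant under conjugation by every element of `π(Γ)` is supported on the
identity. -/
theorem conj_invariant_measure_supported_on_identity {Γ G : Type} [Group Γ] [Group G]
    [Countable G] [MeasurableSpace G] [DiscreteMeasurableSpace G]
    (π : Γ →* G) (hicc : IsICC π)
    (ν : Measure G) [IsFiniteMeasure ν]
    (hinv : ∀ γ : Γ, ν.map (fun g => π γ * g * (π γ)⁻¹) = ν) :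
    ν {(1 : G)}ᶜ = 0 := by
  rw [measure_null_iff_singleton (Set.to_countable _)]
  exact fun g hg => measure_singleton_eq_zero_of_infinite_orbit
    (fun γ g => π γ * g * (π γ)⁻¹) (fun _ => .of_discrete)
    (fun γ => (MulAut.conj (π γ)).injective) hinv (hicc g hg)
end
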